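/- arXiv:2007.16144 — 4 statements merged into one kernel-verified Lean document; each statement's English description precedes it below -/
import Mathlib

section
/- Let N > 0, K = [0,N]², and let ℓ with N < ℓ ≤ √2·N. If a (closed) rectangle R with side lengths ℓ and h is contained in K (after any rotation and translation, i.e., R is congruent to [0,ℓ]×[0,h] via an isometry of the plane), then h ≤ √2·N − ℓ. -/
def ksq (N : ℝ) : Set (EuclideanSpace ℝ (Fin 2)) :=
  {p | p 0 ∈ Set.Icc 0 N ∧ p 1 ∈ Set.Icc 0 N}

/-!
If the placement sends the rectangle to the corners `f 0`, `f 0 + u`, `f 0 + v`, `f 0 + u + v`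
with `u ⊥ v`, `‖u‖ = ℓ`, `‖v‖ = h`, then in each coordinate `|u i| + |v i| ≤ N`. In the plane
orthogonality gives `ℓ |v 0| = h |u 1|` and `ℓ |v 1| = h |u 0|`, so if `a ≥ b` are `|u 0|, |u 1|`
in some order, one of these bounds reads `ℓ a + h b ≤ ℓ N`. The arc `a² + b² = ℓ²`, `0 ≤ b ≤ a`,
lies beyond its chord `a + (√2 - 1) b = ℓ`; together with `N < ℓ` this gives
`h b ≤ (√2 N - ℓ) b`.
-/

open Real

lemma le_add_sqrt_two_sub_one_mul_of_sq_add_sq_eq {a b r : ℝ} (hr : 0 < r) (hb : 0 ≤ b)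
    (hba : b ≤ a) (hab : a ^ 2 + b ^ 2 = r ^ 2) : r ≤ a + (√2 - 1) * b := by
  have h2 : √2 ^ 2 = 2 := sq_sqrt zero_le_two
  have h1 : 1 < √2 := by nlinarith [sqrt_nonneg 2]
  have ha : r ≤ √2 * a := by nlinarith [mul_nonneg (sqrt_nonneg 2) (hb.trans hba)]
  have hb' : √2 * b ≤ r := by nlinarith [mul_nonneg (sqrt_nonneg 2) hb]
  have hA : b ≤ (√2 - 1) * (r + a) := by
    nlinarith [mul_nonneg (sub_nonneg.2 h1.le) (sub_nonneg.2 ha)]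
  have hprod : (r - a) * (r + a) ≤ (√2 - 1) * b * (r + a) := by
    nlinarith [mul_nonneg hb (sub_nonneg.2 hA)]
  nlinarith [le_of_mul_le_mul_right hprod (by linarith [hb.trans hba])]

lemma le_sqrt_two_mul_sub {N ℓ h a b : ℝ} (hℓ : 0 < ℓ) (hNℓ : N < ℓ) (hb : 0 ≤ b)
    (hba : b ≤ a) (hab : a ^ 2 + b ^ 2 = ℓ ^ 2) (hproj : ℓ * a + h * b ≤ ℓ * N) :
    h ≤ √2 * N - ℓ := by
  have hb_pos : 0 < b := by
    refine hb.lt_of_ne fun hb0 => ?_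
    subst hb0
    have : a = ℓ := (sq_eq_sq₀ hba hℓ.le).1 (by linarith)
    subst this
    nlinarith
  have hb' : √2 * b ≤ ℓ := by
    have h2 : √2 ^ 2 = 2 := sq_sqrt zero_le_two
    nlinarith [mul_nonneg (sqrt_nonneg 2) hb]
  have key : N * (ℓ - √2 * b) ≤ ℓ * (a - b) :=
    calc N * (ℓ - √2 * b) ≤ ℓ * (ℓ - √2 * b) := mul_le_mul_of_nonneg_right hNℓ.le (by linarith)
      _ ≤ ℓ * (a - b) := by
        have := le_add_sqrt_two_sub_one_mul_of_sq_add_sq_eq hℓ hb hba hab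
        exact mul_le_mul_of_nonneg_left (by linarith) hℓ.le
  refine le_of_mul_le_mul_right ?_ hb_pos
  linarith

lemma abs_add_abs_le_of_mem_Icc {a u v N : ℝ} (h₀ : a ∈ Set.Icc 0 N)
    (hu : a + u ∈ Set.Icc 0 N) (hv : a + v ∈ Set.Icc 0 N) (huv : a + u + v ∈ Set.Icc 0 N) :
    |u| + |v| ≤ N := by
  simp only [Set.mem_Icc] at *
  rcases abs_cases u with ⟨hu', _⟩ | ⟨hu', _⟩ <;> rcases abs_cases v with ⟨hv', _⟩ | ⟨hv', _⟩ <;>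
    linarith

lemma abs_add_abs_le_of_corners_mem_ksq {N : ℝ} {a u v : EuclideanSpace ℝ (Fin 2)}
    (h₀ : a ∈ ksq N) (hu : a + u ∈ ksq N) (hv : a + v ∈ ksq N) (huv : a + u + v ∈ ksq N)
    (i : Fin 2) : |u i| + |v i| ≤ N := by
  fin_cases i
  · exact abs_add_abs_le_of_mem_Icc h₀.1 hu.1 hv.1 huv.1
  · exact abs_add_abs_le_of_mem_Icc h₀.2 hu.2 hv.2 huv.2

lemma norm_mul_abs_apply_zero_eq_of_inner_eq_zero {u v : EuclideanSpace ℝ (Fin 2)}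
    (huv : inner ℝ u v = 0) : ‖u‖ * |v 0| = ‖v‖ * |u 1| := by
  have hu := EuclideanSpace.real_norm_sq_eq u
  have hv := EuclideanSpace.real_norm_sq_eq v
  rw [PiLp.inner_apply, Fin.sum_univ_two] at huv
  simp only [Fin.sum_univ_two] at hu hv
  simp only [RCLike.inner_apply, conj_trivial] at huv
  refine (sq_eq_sq₀ (by positivity) (by positivity)).1 ?_
  rw [mul_pow, mul_pow, hu, hv, sq_abs, sq_abs]
  linear_combination (u 0 * v 0 - u 1 * v 1) * huv

lemma norm_le_sqrt_two_mul_sub_of_inner_eq_zero {N : ℝ} {u v : EuclideanSpace ℝ (Fin 2)}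
    (huv : inner ℝ u v = 0) (hNu : N < ‖u‖) (hproj : ∀ i, |u i| + |v i| ≤ N) :
    ‖v‖ ≤ √2 * N - ‖u‖ := by
  have hu_pos : 0 < ‖u‖ :=
    hNu.trans_le' <| (add_nonneg (abs_nonneg _) (abs_nonneg _)).trans (hproj 0)
  have h₀ := norm_mul_abs_apply_zero_eq_of_inner_eq_zero huv
  have h₁ := norm_mul_abs_apply_zero_eq_of_inner_eq_zero (real_inner_comm u v ▸ huv)
  have hsq : |u 0| ^ 2 + |u 1| ^ 2 = ‖u‖ ^ 2 := by
    simp [EuclideanSpace.real_norm_sq_eq, Fin.sum_univ_two]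
  rcases le_total |u 1| |u 0| with h | h
  · refine le_sqrt_two_mul_sub hu_pos hNu (abs_nonneg _) h hsq ?_
    nlinarith [hproj 0]
  · refine le_sqrt_two_mul_sub hu_pos hNu (abs_nonneg _) h (by linarith) ?_
    nlinarith [hproj 1]

theorem stmt1_general (N ℓ h : ℝ) (hN : 0 < N) (hℓ1 : N < ℓ)
    (hh : 0 ≤ h)
    (f : EuclideanSpace ℝ (Fin 2) ≃ᵢ EuclideanSpace ℝ (Fin 2))
    (hfit : f '' {p | p 0 ∈ Set.Icc 0 ℓ ∧ p 1 ∈ Set.Icc 0 h} ⊆ ksq N) :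
    h ≤ Real.sqrt 2 * N - ℓ := by
  set L := f.toRealLinearIsometryEquiv
  have hf : ∀ p, f p = f 0 + L p := fun p => by simp [L]
  set x := EuclideanSpace.single (0 : Fin 2) ℓ
  set y := EuclideanSpace.single (1 : Fin 2) h
  have hcorner : ∀ p, p 0 ∈ Set.Icc 0 ℓ → p 1 ∈ Set.Icc 0 h → f 0 + L p ∈ ksq N :=
    fun p hp0 hp1 => hf p ▸ hfit ⟨p, ⟨hp0, hp1⟩, rfl⟩
  have hℓ : 0 ≤ ℓ := hN.le.trans hℓ1.le
  have hproj := abs_add_abs_le_of_corners_mem_ksq (a := f 0) (u := L x) (v := L y)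
    (by simpa using hcorner 0 (by simp [hℓ]) (by simp [hh]))
    (hcorner x (by simp [x, hℓ]) (by simp [x, hh]))
    (hcorner y (by simp [y, hℓ]) (by simp [y, hh]))
    (by simpa [add_assoc] using hcorner (x + y) (by simp [x, y, hℓ]) (by simp [x, y, hh]))
  have horth : inner ℝ (L x) (L y) = 0 := by simp [x, y, EuclideanSpace.inner_single_left]
  have hNu : N < ‖L x‖ := by simpa [x, abs_of_nonneg hℓ] using hℓ1
  simpa [x, y, abs_of_nonneg hℓ, abs_of_nonneg hh] using
    norm_le_sqrt_two_mul_sub_of_inner_eq_zero horth hNu hproj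

/-- if a rectangle with side lengths ℓ and h (with N < ℓ ≤ √2·N)
fits into K = [0,N]² after an isometric placement, then h ≤ √2·N − ℓ. -/
theorem stmt1 (N ℓ h : ℝ) (hN : 0 < N) (hℓ1 : N < ℓ) (hℓ2 : ℓ ≤ Real.sqrt 2 * N)
    (hh : 0 ≤ h)
    (f : EuclideanSpace ℝ (Fin 2) ≃ᵢ EuclideanSpace ℝ (Fin 2))
    (hfit : f '' {p | p 0 ∈ Set.Icc 0 ℓ ∧ p 1 ∈ Set.Icc 0 h} ⊆ ksq N) :
    h ≤ Real.sqrt 2 * N - ℓ :=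
  stmt1_general N ℓ h hN hℓ1 hh f hfit
end

section
/- Let N > 0 and let P ⊆ [0,N]² be a convex body whose diameter ℓ satisfies ℓ > √(N² + (N−r)²) where r = N − √(ℓ² − N²) and ℓ > N. Then any two points p, q of P realizing the diameter (|p−q| = ℓ) satisfy: p and q each lie within one of the four corner triangles of leg r of the square; moreover they lie in diagonally opposite corner triangles. -/
/-!
Order the two points so that `p ≤ q` in both coordinates (the other orientations are reflections)
and put `a = N - p 0`, `b = N - p 1`, `c = √(ℓ² - N²)`. Then `a, b ≤ N` and
`a² + b² ≥ |p - q|² = N² + c²`, so `(N² - a²)(N² - b²) ≥ 0` gives `ab ≥ Nc` and hence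
`a + b ≥ N + c`, i.e. `p 0 + p 1 ≤ N - c = r`: `p` lies in the corner triangle at the origin.
The same argument applied to `N - q` puts `q` in the opposite corner triangle.
-/

noncomputable def pt (x y : ℝ) : EuclideanSpace ℝ (Fin 2) :=
  (WithLp.equiv 2 (Fin 2 → ℝ)).symm ![x, y]

/-- The corner triangle of leg r at the corner c of the square, where
`ex`/`ey` are the unit directions pointing into the square from c. -/
noncomputable def cornerTri (c : EuclideanSpace ℝ (Fin 2)) (ex ey : EuclideanSpace ℝ (Fin 2))
    (r : ℝ) : Set (EuclideanSpace ℝ (Fin 2)) :=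
  convexHull ℝ {c, c + r • ex, c + r • ey}

lemma add_le_add_of_sq_add_sq_le {N a b c : ℝ} (ha : 0 ≤ a) (hb : 0 ≤ b) (haN : a ≤ N)
    (hbN : b ≤ N) (h : N ^ 2 + c ^ 2 ≤ a ^ 2 + b ^ 2) : N + c ≤ a + b := by
  have hprod : N * c ≤ a * b := by
    refine le_of_sq_le_sq ?_ (mul_nonneg ha hb)
    have hcorner : 0 ≤ (N ^ 2 - a ^ 2) * (N ^ 2 - b ^ 2) :=
      mul_nonneg (by nlinarith) (by nlinarith)
    nlinarith
  exact le_of_sq_le_sq (by nlinarith) (add_nonneg ha hb)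

lemma add_le_sub_of_sq_add_sq_eq {N c x y u v : ℝ} (hx : 0 ≤ x) (hy : 0 ≤ y) (hxu : x ≤ u)
    (hyv : y ≤ v) (huN : u ≤ N) (hvN : v ≤ N)
    (h : (u - x) ^ 2 + (v - y) ^ 2 = N ^ 2 + c ^ 2) : x + y ≤ N - c := by
  have hu : (u - x) ^ 2 ≤ (N - x) ^ 2 := pow_le_pow_left₀ (by linarith) (by linarith) 2
  have hv : (v - y) ^ 2 ≤ (N - y) ^ 2 := pow_le_pow_left₀ (by linarith) (by linarith) 2
  have hsum := add_le_add_of_sq_add_sq_le (N := N) (a := N - x) (b := N - y) (c := c)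
    (by linarith) (by linarith) (by linarith) (by linarith) (by linarith)
  linarith

lemma mem_cornerTri {c ex ey : EuclideanSpace ℝ (Fin 2)} {r x y : ℝ} (hx : 0 ≤ x) (hy : 0 ≤ y)
    (hxy : x + y ≤ r) : c + x • ex + y • ey ∈ cornerTri c ex ey r := by
  rcases (add_nonneg hx hy).trans hxy |>.eq_or_lt with hr | hr
  · obtain ⟨rfl, rfl⟩ : x = 0 ∧ y = 0 := by constructor <;> linarith
    simpa [cornerTri] using subset_convexHull ℝ _ (Set.mem_insert c _)
  · unfold cornerTri
    convert (convex_convexHull ℝ _).sum_mem (t := Finset.univ)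
      (w := ![1 - (x + y) / r, x / r, y / r]) (z := ![c, c + r • ex, c + r • ey]) ?_ ?_ ?_ using 1
    · simp only [Fin.sum_univ_three, Matrix.cons_val_zero, Matrix.cons_val_one,
        Matrix.cons_val_two, Matrix.head_cons, Matrix.tail_cons, smul_add, smul_smul]
      match_scalars <;> field_simp
      ring
    · intro i _
      fin_cases i <;> simp only [Fin.zero_eta, Fin.mk_one, Fin.reduceFinMk, Matrix.cons_val]
      · rw [sub_nonneg, div_le_one hr]; exact hxy
      all_goals positivity
    · simp only [Fin.sum_univ_three, Matrix.cons_val]; field_simp; ring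
    · intro i _
      fin_cases i <;> exact subset_convexHull ℝ _ (by simp)

lemma mem_cornerTri_pt {p : EuclideanSpace ℝ (Fin 2)} {a b s t r x y : ℝ}
    (hp0 : p 0 = a + x * s) (hp1 : p 1 = b + y * t) (hx : 0 ≤ x) (hy : 0 ≤ y) (hxy : x + y ≤ r) :
    p ∈ cornerTri (pt a b) (pt s 0) (pt 0 t) r := by
  convert mem_cornerTri (c := pt a b) (ex := pt s 0) (ey := pt 0 t) hx hy hxy
  ext i
  fin_cases i <;> simp [pt, hp0, hp1]

lemma EuclideanSpace.dist_sq_eq_fin_two (p q : EuclideanSpace ℝ (Fin 2)) :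
    dist p q ^ 2 = (p 0 - q 0) ^ 2 + (p 1 - q 1) ^ 2 := by
  simp [EuclideanSpace.dist_sq_eq, Fin.sum_univ_two, Real.dist_eq, sq_abs]

section farApart

variable {N c : ℝ} {p q : EuclideanSpace ℝ (Fin 2)}

lemma mem_cornerTri_diagonal (hp : p ∈ ksq N) (hq : q ∈ ksq N) (h0 : p 0 ≤ q 0)
    (h1 : p 1 ≤ q 1) (hd : dist p q ^ 2 = N ^ 2 + c ^ 2) :
    p ∈ cornerTri (pt 0 0) (pt 1 0) (pt 0 1) (N - c) ∧
      q ∈ cornerTri (pt N N) (pt (-1) 0) (pt 0 (-1)) (N - c) := by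
  obtain ⟨⟨hp0, hp0N⟩, hp1, hp1N⟩ := hp
  obtain ⟨⟨hq0, hq0N⟩, hq1, hq1N⟩ := hq
  rw [EuclideanSpace.dist_sq_eq_fin_two] at hd
  constructor
  · refine mem_cornerTri_pt (x := p 0) (y := p 1) (by ring) (by ring) hp0 hp1 ?_
    exact add_le_sub_of_sq_add_sq_eq hp0 hp1 h0 h1 hq0N hq1N (by linear_combination hd)
  · refine mem_cornerTri_pt (x := N - q 0) (y := N - q 1) (by ring) (by ring)
      (by linarith) (by linarith) ?_
    exact add_le_sub_of_sq_add_sq_eq (u := N - p 0) (v := N - p 1) (by linarith) (by linarith)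
      (by linarith) (by linarith) (by linarith) (by linarith) (by linear_combination hd)

lemma mem_cornerTri_antidiagonal (hp : p ∈ ksq N) (hq : q ∈ ksq N) (h0 : p 0 ≤ q 0)
    (h1 : q 1 ≤ p 1) (hd : dist p q ^ 2 = N ^ 2 + c ^ 2) :
    p ∈ cornerTri (pt 0 N) (pt 1 0) (pt 0 (-1)) (N - c) ∧
      q ∈ cornerTri (pt N 0) (pt (-1) 0) (pt 0 1) (N - c) := by
  obtain ⟨⟨hp0, hp0N⟩, hp1, hp1N⟩ := hp
  obtain ⟨⟨hq0, hq0N⟩, hq1, hq1N⟩ := hq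
  rw [EuclideanSpace.dist_sq_eq_fin_two] at hd
  constructor
  · refine mem_cornerTri_pt (x := p 0) (y := N - p 1) (by ring) (by ring) hp0 (by linarith) ?_
    exact add_le_sub_of_sq_add_sq_eq (u := q 0) (v := N - q 1) hp0 (by linarith) h0
      (by linarith) hq0N (by linarith) (by linear_combination hd)
  · refine mem_cornerTri_pt (x := N - q 0) (y := q 1) (by ring) (by ring) (by linarith) hq1 ?_
    exact add_le_sub_of_sq_add_sq_eq (u := N - p 0) (v := p 1) (by linarith) hq1
      (by linarith) h1 (by linarith) hp1N (by linear_combination hd)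

end farApart

theorem stmt6_general (N ℓ r : ℝ) (hℓ1 : N < ℓ)
    (hr : r = N - Real.sqrt (ℓ ^ 2 - N ^ 2))
    (p q : EuclideanSpace ℝ (Fin 2)) (hp : p ∈ ksq N) (hq : q ∈ ksq N)
    (hdist : dist p q = ℓ) :
    (p ∈ cornerTri (pt 0 0) (pt 1 0) (pt 0 1) r ∧
       q ∈ cornerTri (pt N N) (pt (-1) 0) (pt 0 (-1)) r) ∨
    (p ∈ cornerTri (pt N N) (pt (-1) 0) (pt 0 (-1)) r ∧
       q ∈ cornerTri (pt 0 0) (pt 1 0) (pt 0 1) r) ∨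
    (p ∈ cornerTri (pt 0 N) (pt 1 0) (pt 0 (-1)) r ∧
       q ∈ cornerTri (pt N 0) (pt (-1) 0) (pt 0 1) r) ∨
    (p ∈ cornerTri (pt N 0) (pt (-1) 0) (pt 0 1) r ∧
       q ∈ cornerTri (pt 0 N) (pt 1 0) (pt 0 (-1)) r) := by
  subst hr
  have hN : 0 ≤ N := hp.1.1.trans hp.1.2
  have hd : dist p q ^ 2 = N ^ 2 + √(ℓ ^ 2 - N ^ 2) ^ 2 := by
    rw [hdist, Real.sq_sqrt (by nlinarith)]; ring
  have hd' : dist q p ^ 2 = N ^ 2 + √(ℓ ^ 2 - N ^ 2) ^ 2 := dist_comm p q ▸ hd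
  rcases le_total (p 0) (q 0) with h0 | h0 <;> rcases le_total (p 1) (q 1) with h1 | h1
  · exact Or.inl (mem_cornerTri_diagonal hp hq h0 h1 hd)
  · exact Or.inr (Or.inr (Or.inl (mem_cornerTri_antidiagonal hp hq h0 h1 hd)))
  · exact Or.inr (Or.inr (Or.inr (mem_cornerTri_antidiagonal hq hp h0 h1 hd').symm))
  · exact Or.inr (Or.inl (mem_cornerTri_diagonal hq hp h0 h1 hd').symm)

/-- two points of [0,N]² at distance ℓ with N < ℓ ≤ √2·N lie in
diagonally opposite corner triangles of leg r = N − √(ℓ² − N²). -/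
theorem stmt6 (N ℓ r : ℝ) (hN : 0 < N) (hℓ1 : N < ℓ) (hℓ2 : ℓ ≤ Real.sqrt 2 * N)
    (hr : r = N - Real.sqrt (ℓ ^ 2 - N ^ 2))
    (p q : EuclideanSpace ℝ (Fin 2)) (hp : p ∈ ksq N) (hq : q ∈ ksq N)
    (hdist : dist p q = ℓ) :
    (p ∈ cornerTri (pt 0 0) (pt 1 0) (pt 0 1) r ∧
       q ∈ cornerTri (pt N N) (pt (-1) 0) (pt 0 (-1)) r) ∨
    (p ∈ cornerTri (pt N N) (pt (-1) 0) (pt 0 (-1)) r ∧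
       q ∈ cornerTri (pt 0 0) (pt 1 0) (pt 0 1) r) ∨
    (p ∈ cornerTri (pt 0 N) (pt 1 0) (pt 0 (-1)) r ∧
       q ∈ cornerTri (pt N 0) (pt (-1) 0) (pt 0 1) r) ∨
    (p ∈ cornerTri (pt N 0) (pt (-1) 0) (pt 0 1) r ∧
       q ∈ cornerTri (pt 0 N) (pt 1 0) (pt 0 (-1)) r) :=
  stmt6_general N ℓ r hℓ1 hr p q hp hq hdist
end

section
/- Let T be a triangle with longest side of length ℓ and let θ be the angle at the vertex v adjacent to the two longest sides, with 0 < θ < π/2. Then area(T) ≥ (ℓ²/8)·tan θ. -/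
open MeasureTheory EuclideanGeometry Pointwise Module Real

/-!
Put `u = a - v`, `w = b - v`. The parallelogram `v + [0, 1/2] u + [0, 1/2] w` lies in the
triangle, and its area is `|u| |w| sin θ / 4`. By the law of cosines the side opposite `v`
satisfies `|a - b|² = |u|² + |w|² - 2 |u| |w| cos θ`, and since it is the shortest side,
`ℓ² ≤ 2 |u| |w| cos θ`, which gives `(ℓ² / 8) tan θ ≤ |u| |w| sin θ / 4`.
-/

theorem vadd_parallelepiped_half_subset_convexHull {E : Type*} [AddCommGroup E] [Module ℝ E]
    (a b v : E) :
    v +ᵥ parallelepiped ![(1 / 2 : ℝ) • (a - v), (1 / 2 : ℝ) • (b - v)]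
      ⊆ convexHull ℝ {a, b, v} := by
  rintro _ ⟨_, ⟨t, ht, rfl⟩, rfl⟩
  obtain ⟨⟨hs0, hs1⟩, ht0, ht1⟩ : (0 ≤ t 0 ∧ t 0 ≤ 1) ∧ (0 ≤ t 1 ∧ t 1 ≤ 1) :=
    ⟨⟨ht.1 0, ht.2 0⟩, ht.1 1, ht.2 1⟩
  have hmem := (convex_convexHull ℝ ({a, b, v} : Set E)).sum_mem (t := Finset.univ)
    (w := ![t 0 / 2, t 1 / 2, 1 - t 0 / 2 - t 1 / 2]) (z := ![a, b, v])
    (by intro i _; fin_cases i <;> simp <;> linarith)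
    (by simp [Fin.sum_univ_three])
    (by intro i _; fin_cases i <;> exact subset_convexHull ℝ _ (by simp))
  convert hmem using 1
  simp [Fin.sum_univ_two, Fin.sum_univ_three]
  module

section TwoDim

variable {F : Type*} [NormedAddCommGroup F] [InnerProductSpace ℝ F] [Fact (finrank ℝ F = 2)]

theorem Orientation.abs_areaForm_eq_sin_angle_mul_norm_mul_norm (o : Orientation ℝ F (Fin 2))
    (x y : F) : |o.areaForm x y| = sin (InnerProductGeometry.angle x y) * (‖x‖ * ‖y‖) := by
  rw [InnerProductGeometry.sin_angle_mul_norm_mul_norm, real_inner_self_eq_norm_sq,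
    real_inner_self_eq_norm_sq, ← o.inner_sq_add_areaForm_sq, ← sqrt_sq_eq_abs]
  congr 1
  ring

variable [FiniteDimensional ℝ F] [MeasurableSpace F] [BorelSpace F]

theorem Orientation.volume_parallelepiped_pair (o : Orientation ℝ F (Fin 2)) (x y : F) :
    volume (parallelepiped ![x, y]) = ENNReal.ofReal |o.areaForm x y| := by
  rw [← o.measure_eq_volume, AlternatingMap.measure_parallelepiped, o.areaForm_to_volumeForm]

theorem EuclideanGeometry.sin_angle_mul_dist_mul_dist_div_four_le_volume_convexHull (a b v : F) :
    ENNReal.ofReal (sin (∠ a v b) * (dist v a * dist v b) / 4)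
      ≤ volume (convexHull ℝ {a, b, v}) := by
  let o : Orientation ℝ F (Fin 2) := (finBasisOfFinrankEq ℝ F Fact.out).orientation
  calc ENNReal.ofReal (sin (∠ a v b) * (dist v a * dist v b) / 4)
      = volume (v +ᵥ parallelepiped ![(1 / 2 : ℝ) • (a - v), (1 / 2 : ℝ) • (b - v)]) := by
        rw [measure_vadd, o.volume_parallelepiped_pair]
        simp only [map_smul, LinearMap.smul_apply, smul_eq_mul, abs_mul]
        rw [o.abs_areaForm_eq_sin_angle_mul_norm_mul_norm, dist_comm v a, dist_comm v b,
          dist_eq_norm, dist_eq_norm, EuclideanGeometry.angle, vsub_eq_sub, vsub_eq_sub,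
          abs_of_pos one_half_pos]
        congr 1
        ring
    _ ≤ volume (convexHull ℝ {a, b, v}) :=
        measure_mono (vadd_parallelepiped_half_subset_convexHull a b v)

end TwoDim

theorem EuclideanGeometry.sq_max_dist_le_two_mul_dist_mul_dist_mul_cos_angle {V P : Type*}
    [NormedAddCommGroup V] [InnerProductSpace ℝ V] [MetricSpace P] [NormedAddTorsor V P]
    {a b v : P} (ha : dist a b ≤ dist v a) (hb : dist a b ≤ dist v b) :
    max (dist v a) (dist v b) ^ 2 ≤ 2 * dist v a * dist v b * cos (∠ a v b) := by
  have hcos := law_cos a v b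
  rw [dist_comm a v, dist_comm b v] at hcos
  have hab := dist_nonneg (x := a) (y := b)
  rcases le_total (dist v a) (dist v b) with h | h
  · rw [max_eq_right h]; nlinarith
  · rw [max_eq_left h]; nlinarith

theorem stmt8_general (a b v : EuclideanSpace ℝ (Fin 2))
    (hab1 : dist a b ≤ dist v a) (hab2 : dist a b ≤ dist v b)
    (ℓ θ : ℝ) (hℓ : ℓ = max (dist v a) (max (dist v b) (dist a b)))
    (hθ : θ = EuclideanGeometry.angle a v b)
    (hθ2 : θ < Real.pi / 2) :
    ENNReal.ofReal (ℓ ^ 2 / 8 * Real.tan θ)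
      ≤ volume (convexHull ℝ ({a, b, v} : Set (EuclideanSpace ℝ (Fin 2)))) := by
  have : Fact (finrank ℝ (EuclideanSpace ℝ (Fin 2)) = 2) := ⟨finrank_euclideanSpace_fin⟩
  refine le_trans (ENNReal.ofReal_le_ofReal ?_)
    (sin_angle_mul_dist_mul_dist_div_four_le_volume_convexHull a b v)
  rw [max_eq_left hab2] at hℓ
  have hkey := sq_max_dist_le_two_mul_dist_mul_dist_mul_cos_angle hab1 hab2
  rw [← hθ, ← hℓ] at hkey
  have hcos : 0 < cos θ := cos_pos_of_mem_Ioo ⟨by linarith [angle_nonneg a v b, pi_pos], hθ2⟩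
  have hsin : 0 ≤ sin θ :=
    sin_nonneg_of_nonneg_of_le_pi (hθ ▸ angle_nonneg a v b) (hθ ▸ angle_le_pi a v b)
  calc ℓ ^ 2 / 8 * tan θ = ℓ ^ 2 * (sin θ / cos θ) / 8 := by rw [tan_eq_sin_div_cos]; ring
    _ ≤ 2 * dist v a * dist v b * cos θ * (sin θ / cos θ) / 8 := by gcongr
    _ = sin (∠ a v b) * (dist v a * dist v b) / 4 := by rw [← hθ]; field_simp; ring

/-- if T is a triangle whose longest side has length ℓ and θ is the
(acute) angle at the vertex v adjacent to the two longest sides, then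
area(T) ≥ (ℓ²/8)·tan θ. -/
theorem stmt8 (a b v : EuclideanSpace ℝ (Fin 2))
    (hnd : ¬ Collinear ℝ ({a, b, v} : Set (EuclideanSpace ℝ (Fin 2))))
    (hab1 : dist a b ≤ dist v a) (hab2 : dist a b ≤ dist v b)
    (ℓ θ : ℝ) (hℓ : ℓ = max (dist v a) (max (dist v b) (dist a b)))
    (hθ : θ = EuclideanGeometry.angle a v b)
    (hθ0 : 0 < θ) (hθ2 : θ < Real.pi / 2) :
    ENNReal.ofReal (ℓ ^ 2 / 8 * Real.tan θ)
      ≤ volume (convexHull ℝ ({a, b, v} : Set (EuclideanSpace ℝ (Fin 2)))) :=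
  stmt8_general a b v hab1 hab2 ℓ θ hℓ hθ hθ2
end

section
/- Let N, n ∈ ℕ be positive and δ > 0. Suppose P₁, ..., Pₖ (k ≤ n) are pairwise disjoint convex sets in [0,N]². If each Pᵢ is translated to the right by i·(δ/n)·N, the resulting sets P₁', ..., Pₖ' are pairwise disjoint and contained in [0, (1+δ)N] × [0,N], provided that the original family is ordered so that for every horizontal line L meeting both Pᵢ and Pⱼ with i < j, the set L ∩ Pᵢ lies entirely to the left of L ∩ Pⱼ. -/
/-! Moving the `i`-th set right by a shift that is strictly increasing in `i` can only
widen the horizontal gap between two ordered sets, so no two translates meet; the largest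
shift, `k · (δ/n) · N ≤ δ N`, is all the extra width needed. -/

open Set Function

@[simp]
lemma add_smul_pt_one_zero_apply_zero (x : EuclideanSpace ℝ (Fin 2)) (c : ℝ) :
    (x + c • pt 1 0) 0 = x 0 + c := by
  simp [pt]

@[simp]
lemma add_smul_pt_one_zero_apply_one (x : EuclideanSpace ℝ (Fin 2)) (c : ℝ) :
    (x + c • pt 1 0) 1 = x 1 := by
  simp [pt]

lemma disjoint_image_add_smul_pt_of_le {A B : Set (EuclideanSpace ℝ (Fin 2))} {a b : ℝ}
    (hAB : ∀ p ∈ A, ∀ q ∈ B, p 1 = q 1 → p 0 ≤ q 0) (hab : a < b) :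
    Disjoint ((fun p => p + a • pt 1 0) '' A) ((fun p => p + b • pt 1 0) '' B) := by
  rw [Set.disjoint_left]
  rintro _ ⟨p, hp, rfl⟩ ⟨q, hq, hqp⟩
  have h0 := congrArg (· 0) hqp
  have h1 := congrArg (· 1) hqp
  simp only [add_smul_pt_one_zero_apply_zero, add_smul_pt_one_zero_apply_one] at h0 h1
  linarith [hAB p hp q hq h1.symm]

lemma pairwise_disjoint_image_add_smul_pt {ι : Type*} [LinearOrder ι]
    {A : ι → Set (EuclideanSpace ℝ (Fin 2))} {c : ι → ℝ} (hc : StrictMono c)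
    (horder : ∀ i j, i < j → ∀ p ∈ A i, ∀ q ∈ A j, p 1 = q 1 → p 0 ≤ q 0) :
    Pairwise (Disjoint on (fun i => (fun p => p + c i • pt 1 0) '' A i)) :=
  (pairwise_disjoint_on _).2 fun i j hij =>
    disjoint_image_add_smul_pt_of_le (horder i j hij) (hc hij)

lemma image_add_smul_pt_subset {A : Set (EuclideanSpace ℝ (Fin 2))} {N W c : ℝ}
    (hA : A ⊆ ksq N) (hc : 0 ≤ c) (hcW : N + c ≤ W) :
    (fun p => p + c • pt 1 0) '' A ⊆ {p | p 0 ∈ Icc 0 W ∧ p 1 ∈ Icc 0 N} := by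
  rintro _ ⟨p, hp, rfl⟩
  obtain ⟨⟨hx0, hxN⟩, hy⟩ := hA hp
  simp only [mem_ofPred_eq, add_smul_pt_one_zero_apply_zero, add_smul_pt_one_zero_apply_one]
  exact ⟨⟨by linarith, by linarith⟩, hy⟩

lemma mul_div_le_of_le {a n δ : ℝ} (hδ : 0 ≤ δ) (hn : 0 < n) (ha : a ≤ n) :
    a * (δ / n) ≤ δ :=
  calc a * (δ / n) ≤ n * (δ / n) := by gcongr
    _ = δ := by field_simp

theorem stmt16_general (N δ : ℝ) (n k : ℕ) (hN : 0 < N) (hδ : 0 < δ) (hn : 0 < n)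
    (hk : k ≤ n) (P : Fin k → Set (EuclideanSpace ℝ (Fin 2)))
    (hsub : ∀ i, P i ⊆ ksq N)
    (horder : ∀ i j : Fin k, i < j → ∀ p ∈ P i, ∀ q ∈ P j, p 1 = q 1 → p 0 ≤ q 0)
    (Q : Fin k → Set (EuclideanSpace ℝ (Fin 2)))
    (hQ : Q = fun i : Fin k =>
      (fun p => p + (((i.val : ℝ) + 1) * (δ / n) * N) • pt 1 0) '' P i) :
    (∀ i j, i ≠ j → Disjoint (Q i) (Q j)) ∧
    (∀ i, Q i ⊆ {p : EuclideanSpace ℝ (Fin 2) |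
        p 0 ∈ Set.Icc 0 ((1 + δ) * N) ∧ p 1 ∈ Set.Icc 0 N}) := by
  subst hQ
  have hshift_mono : StrictMono fun i : Fin k => ((i.val : ℝ) + 1) * (δ / n) * N := by
    intro i j hij
    have hij' : (i.val : ℝ) + 1 < j.val + 1 := by gcongr; exact_mod_cast hij
    simp only [mul_assoc]
    exact mul_lt_mul_of_pos_right hij' (by positivity)
  have hshift_le (i : Fin k) : ((i.val : ℝ) + 1) * (δ / n) ≤ δ :=
    mul_div_le_of_le hδ.le (by exact_mod_cast hn) (by exact_mod_cast i.isLt.trans_le hk)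
  refine ⟨pairwise_disjoint_image_add_smul_pt hshift_mono horder, fun i =>
    image_add_smul_pt_subset (hsub i) (by positivity) ?_⟩
  nlinarith [hshift_le i]

/-- translating the i-th of k ≤ n pairwise disjoint convex sets in
[0,N]², ordered left to right, to the right by i·(δ/n)·N keeps them pairwise
disjoint and inside [0,(1+δ)N] × [0,N]. -/
theorem stmt16 (N δ : ℝ) (n k : ℕ) (hN : 0 < N) (hδ : 0 < δ) (hn : 0 < n)
    (hk : k ≤ n) (P : Fin k → Set (EuclideanSpace ℝ (Fin 2)))
    (hconv : ∀ i, Convex ℝ (P i))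
    (hsub : ∀ i, P i ⊆ ksq N)
    (hdisj : ∀ i j, i ≠ j → Disjoint (P i) (P j))
    (horder : ∀ i j : Fin k, i < j → ∀ p ∈ P i, ∀ q ∈ P j, p 1 = q 1 → p 0 ≤ q 0)
    (Q : Fin k → Set (EuclideanSpace ℝ (Fin 2)))
    (hQ : Q = fun i : Fin k =>
      (fun p => p + (((i.val : ℝ) + 1) * (δ / n) * N) • pt 1 0) '' P i) :
    (∀ i j, i ≠ j → Disjoint (Q i) (Q j)) ∧
    (∀ i, Q i ⊆ {p : EuclideanSpace ℝ (Fin 2) |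
        p 0 ∈ Set.Icc 0 ((1 + δ) * N) ∧ p 1 ∈ Set.Icc 0 N}) :=
  stmt16_general N δ n k hN hδ hn hk P hsub horder Q hQ
end
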